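/- Let π = ⟨c1,...,cm⟩ be a reduction of G_M, and suppose for some 1 ≤ k < m that the connected components of G_RB^{k-1} and G_RB^k contain the same sets of vertices (i.e., realizing c_k creates no new connected component and isolates no species). Then the ordering π' obtained from π by swapping c_k and c_{k+1} is also a reduction of G_M. -/

import Mathlib

open Classical

/-- A red-black graph: a bipartite graph on characters `C` and species `S`
with edges colored black or red. -/
structure RBGraph (S C : Type) where
  black : C → S → Prop
  red : C → S → Prop

namespace RBGraph

variable {S C : Type}

/-- `c` and `s` are adjacent (by an edge of either color). -/
def adj (G : RBGraph S C) (c : C) (s : S) : Prop := G.black c s ∨ G.red c s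

/-- The underlying simple graph on `S ⊕ C`. -/
def toSimple (G : RBGraph S C) : SimpleGraph (S ⊕ C) where
  Adj x y := (∃ s c, x = Sum.inl s ∧ y = Sum.inr c ∧ G.adj c s) ∨
             (∃ s c, x = Sum.inr c ∧ y = Sum.inl s ∧ G.adj c s)
  symm := by
    constructor
    rintro x y (⟨s, c, rfl, rfl, h⟩ | ⟨s, c, rfl, rfl, h⟩)
    · exact Or.inr ⟨s, c, rfl, rfl, h⟩
    · exact Or.inl ⟨s, c, rfl, rfl, h⟩
  loopless := by
    constructor
    rintro x (⟨s, c, rfl, h, -⟩ | ⟨s, c, rfl, h, -⟩) <;> simp at h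

/-- `s` lies in the connected component of `c`. -/
def sameComp (G : RBGraph S C) (c : C) (s : S) : Prop :=
  G.toSimple.Reachable (Sum.inr c) (Sum.inl s)

/-- A character is active if it is incident to a red edge. -/
def active (G : RBGraph S C) (c : C) : Prop := ∃ s, G.red c s

/-- A character is inactive if it is incident to no red edge. -/
def inactive (G : RBGraph S C) (c : C) : Prop := ¬ G.active c

/-- A character adjacent via red edges to all species of its connected component. -/
def redUniversal (G : RBGraph S C) (c : C) : Prop :=
  G.active c ∧ ∀ s, G.sameComp c s → G.red c s

/-- Remove all edges of red-universal characters (one round). -/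
def pruneStep (G : RBGraph S C) : RBGraph S C :=
  ⟨fun c s => G.black c s ∧ ¬ G.redUniversal c,
   fun c s => G.red c s ∧ ¬ G.redUniversal c⟩

/-- Repeatedly remove all edges of red-universal characters. -/
def prune [Fintype C] (G : RBGraph S C) : RBGraph S C :=
  pruneStep^[Fintype.card C] G

/-- Realization of a character `c`: add red edges from `c` to the species of its
connected component not adjacent to `c`, delete the black edges of `c`, then
repeatedly remove the edges of red-universal characters. -/
def realize [Fintype C] (G : RBGraph S C) (c : C) : RBGraph S C :=
  prune ⟨fun c' s => G.black c' s ∧ c' ≠ c,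
         fun c' s => G.red c' s ∨ (c' = c ∧ ¬ G.black c s ∧ G.sameComp c s)⟩

/-- Realize a sequence of characters in order. -/
def realizeSeq [Fintype C] (G : RBGraph S C) (l : List C) : RBGraph S C :=
  l.foldl realize G

/-- The graph has no edges. -/
def edgeless (G : RBGraph S C) : Prop := ∀ c s, ¬ G.adj c s

/-- A red Σ-graph: an induced all-red path `s1 - c1 - s2 - c2 - s3`. -/
def redSigma (G : RBGraph S C) : Prop :=
  ∃ (c1 c2 : C) (s1 s2 s3 : S), c1 ≠ c2 ∧ s1 ≠ s2 ∧ s2 ≠ s3 ∧ s1 ≠ s3 ∧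
    G.red c1 s1 ∧ G.red c1 s2 ∧ G.red c2 s2 ∧ G.red c2 s3 ∧
    ¬ G.adj c1 s3 ∧ ¬ G.adj c2 s1

/-- A reduction of a red-black graph: an ordering of its (non-isolated) inactive
characters whose successive realizations yield an edgeless graph, never creating
a red Σ-graph. -/
def isReductionFrom [Fintype C] (G : RBGraph S C) (l : List C) : Prop :=
  l.Nodup ∧ (∀ c, G.inactive c → (∃ s, G.black c s) → c ∈ l) ∧
  (∀ c ∈ l, G.inactive c) ∧
  edgeless (realizeSeq G l) ∧
  ∀ k ≤ l.length, ¬ redSigma (realizeSeq G (l.take k))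

/-- A red-black graph is reducible if it admits a reduction. -/
def reducible [Fintype C] (G : RBGraph S C) : Prop := ∃ l, isReductionFrom G l

/-- A character is safe if its realization yields a reducible red-black graph. -/
def safe [Fintype C] (G : RBGraph S C) (c : C) : Prop := reducible (G.realize c)

/-- The (all-black) red-black graph of a binary species-character matrix. -/
def ofMatrix (M : C → S → Prop) : RBGraph S C := ⟨M, fun _ _ => False⟩

/-- A reduction of the graph of a matrix: an ordering of all characters whose
successive realizations yield an edgeless graph, never creating a red Σ-graph. -/
def isReduction [Fintype C] (M : C → S → Prop) (l : List C) : Prop :=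
  l.Nodup ∧ (∀ c, c ∈ l) ∧ edgeless (realizeSeq (ofMatrix M) l) ∧
  ∀ k ≤ l.length, ¬ redSigma (realizeSeq (ofMatrix M) (l.take k))

/-- The partial reduction after realizing the first `t` characters of `l`. -/
def partialRed [Fintype C] (M : C → S → Prop) (l : List C) (t : ℕ) : RBGraph S C :=
  realizeSeq (ofMatrix M) (l.take t)

/-- The matrix is maximal: no character's species set is contained in that of
another character. -/
def MaximalM (M : C → S → Prop) : Prop :=
  ∀ c1 c2 : C, c1 ≠ c2 → ¬ (∀ s, M c1 s → M c2 s)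

/-- A vertex is non-isolated if it has an incident edge. -/
def nonIsolated (G : RBGraph S C) : S ⊕ C → Prop
  | Sum.inl s => ∃ c, G.adj c s
  | Sum.inr c => ∃ s, G.adj c s

/-- The graph has a single connected component (ignoring isolated vertices). -/
def singleComponent (G : RBGraph S C) : Prop :=
  ∀ x y, G.nonIsolated x → G.nonIsolated y → G.toSimple.Reachable x y

/-- Species incident only to black edges (and at least one of them). -/
def SB (G : RBGraph S C) : Set S := {s | (∃ c, G.black c s) ∧ ∀ c, ¬ G.red c s}

/-- Species incident to at least one red edge. -/
def SR (G : RBGraph S C) : Set S := {s | ∃ c, G.red c s}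

/-- Inactive characters whose neighborhood is contained in `S_R`. -/
def CC (G : RBGraph S C) : Set C :=
  {c | G.inactive c ∧ (∃ s, G.black c s) ∧ ∀ s, G.black c s → s ∈ G.SR}

/-- Inactive characters with a neighbor and a non-neighbor in `S_R`. -/
def CI (G : RBGraph S C) : Set C :=
  {c | G.inactive c ∧ (∃ s ∈ G.SR, G.black c s) ∧ (∃ s ∈ G.SR, ¬ G.black c s)}

/-- Inactive characters with a neighbor in `S_B` that are universal on `S_R`. -/
def CU (G : RBGraph S C) : Set C :=
  {c | G.inactive c ∧ (∃ s ∈ G.SB, G.black c s) ∧ ∀ s ∈ G.SR, G.black c s}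

/-- The subgraph induced by a set of characters and a set of species. -/
def induced (G : RBGraph S C) (Cs : Set C) (Ss : Set S) : RBGraph S C :=
  ⟨fun c s => G.black c s ∧ c ∈ Cs ∧ s ∈ Ss,
   fun c s => G.red c s ∧ c ∈ Cs ∧ s ∈ Ss⟩

/-- `c2` is the center of an induced path on four species and three characters. -/
def isP7Center (M : C → S → Prop) (c2 : C) : Prop :=
  ∃ (c1 c3 : C) (s1 s2 s3 s4 : S),
    c1 ≠ c2 ∧ c2 ≠ c3 ∧ c1 ≠ c3 ∧
    s1 ≠ s2 ∧ s1 ≠ s3 ∧ s1 ≠ s4 ∧ s2 ≠ s3 ∧ s2 ≠ s4 ∧ s3 ≠ s4 ∧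
    M c1 s1 ∧ M c1 s2 ∧ M c2 s2 ∧ M c2 s3 ∧ M c3 s3 ∧ M c3 s4 ∧
    ¬ M c1 s3 ∧ ¬ M c1 s4 ∧ ¬ M c2 s1 ∧ ¬ M c2 s4 ∧ ¬ M c3 s1 ∧ ¬ M c3 s2

/-- Minimum-degree species none of whose characters is the center of an induced `P7`. -/
def S7m (M : C → S → Prop) : Set S :=
  {s | (∀ s', {c | M c s}.ncard ≤ {c | M c s'}.ncard) ∧
       ∀ c, M c s → ¬ isP7Center M c}

/-- The species of `S_B` not adjacent to `cm`. -/
def SBm (G : RBGraph S C) (cm : C) : Set S := {s | s ∈ G.SB ∧ ¬ G.black cm s}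

/-- `C_I` together with the characters of `C_U` with a neighbor in `S_B^m`. -/
def CBm (G : RBGraph S C) (cm : C) : Set C :=
  G.CI ∪ {c ∈ G.CU | ∃ s ∈ G.SBm cm, G.black c s}

end RBGraph

/-!
Since realizing `c_k` changes no connected component, it prunes nothing: a red-universal
character would be isolated by the pruning. Hence, before `c_{k+1}` is realized, the realization
of `c_k` just adds its red star, and this commutes with realizing `c_{k+1}` up to the following
relation: `G'` refines `G` when it has the black edges of `G` and exactly those red edges of `G`
that lie in its own components. Realizing `c_{k+1}, c_k` yields a refinement of what realizing
`c_k, c_{k+1}` yields, refinement survives every further realization, a refinement of an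
edgeless graph is edgeless, and a red Σ-graph in a refinement is one in the coarser graph.
Finally the one new prefix, ending in `c_{k+1}`, has no red Σ-graph, since realizing the still
inactive `c_k` would keep it.
-/

namespace RBGraph

variable {S C : Type}

lemma toSimple_adj_inr_inl {G : RBGraph S C} {c : C} {s : S} :
    G.toSimple.Adj (Sum.inr c) (Sum.inl s) ↔ G.adj c s := by
  simp [toSimple]

lemma sameComp_of_adj {G : RBGraph S C} {c : C} {s : S} (h : G.adj c s) : G.sameComp c s :=
  (toSimple_adj_inr_inl.2 h).reachable

lemma sameComp_of_red {G : RBGraph S C} {c : C} {s : S} (h : G.red c s) : G.sameComp c s :=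
  sameComp_of_adj (Or.inr h)

lemma sameComp_of_red_red_red {G : RBGraph S C} {c₁ c₂ : C} {s₂ s₃ : S}
    (h₁₂ : G.red c₁ s₂) (h₂₂ : G.red c₂ s₂) (h₂₃ : G.red c₂ s₃) : G.sameComp c₁ s₃ :=
  (sameComp_of_red h₁₂).trans ((sameComp_of_red h₂₂).symm.trans (sameComp_of_red h₂₃))

lemma reachable_of_forall_adj {G' G : RBGraph S C}
    (h : ∀ c s, G'.adj c s → G.sameComp c s) {x y : S ⊕ C}
    (hr : G'.toSimple.Reachable x y) : G.toSimple.Reachable x y := by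
  rw [SimpleGraph.reachable_iff_reflTransGen] at hr ⊢
  refine Relation.ReflTransGen.lift' id ?_ _ _ hr
  rintro _ _ (⟨s, c, rfl, rfl, hadj⟩ | ⟨s, c, rfl, rfl, hadj⟩) <;>
    rw [Function.onFun, id, id, ← SimpleGraph.reachable_iff_reflTransGen]
  · exact (h c s hadj).symm
  · exact h c s hadj

lemma not_sameComp_of_isolated {G : RBGraph S C} {c : C} (h : ∀ s, ¬ G.adj c s) (s : S) :
    ¬ G.sameComp c s := by
  rintro ⟨w⟩
  obtain _ | ⟨hadj, _⟩ := w
  rcases hadj with ⟨_, _, hc, -⟩ | ⟨t, _, hc, rfl, hadj⟩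
  · cases hc
  · cases hc
    exact h t hadj

def preRealize (G : RBGraph S C) (c : C) : RBGraph S C :=
  ⟨fun c' s => G.black c' s ∧ c' ≠ c,
   fun c' s => G.red c' s ∨ (c' = c ∧ ¬ G.black c s ∧ G.sameComp c s)⟩

lemma realize_eq_prune_preRealize [Fintype C] (G : RBGraph S C) (c : C) :
    G.realize c = prune (G.preRealize c) := rfl

lemma sameComp_of_adj_preRealize {G : RBGraph S C} {c d : C} {s : S}
    (h : (G.preRealize c).adj d s) : G.sameComp d s := by
  rcases h with ⟨hb, -⟩ | hr | ⟨rfl, -, hsc⟩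
  · exact sameComp_of_adj (Or.inl hb)
  · exact sameComp_of_red hr
  · exact hsc

lemma reachable_of_reachable_preRealize {G : RBGraph S C} {c : C} {x y : S ⊕ C}
    (h : (G.preRealize c).toSimple.Reachable x y) : G.toSimple.Reachable x y :=
  reachable_of_forall_adj (fun _ _ => sameComp_of_adj_preRealize) h

lemma adj_of_adj_iterate_pruneStep {G : RBGraph S C} {c : C} {s : S} (n : ℕ)
    (h : (pruneStep^[n] G).adj c s) : G.adj c s :=
  Function.Iterate.rec (f := pruneStep) (fun H : RBGraph S C => ∀ c s, H.adj c s → G.adj c s)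
    (fun _ _ => id)
    (fun _ hH c s hadj => hH c s (hadj.imp And.left And.left)) n c s h

lemma red_of_red_iterate_pruneStep {G : RBGraph S C} {c : C} {s : S} (n : ℕ)
    (h : (pruneStep^[n] G).red c s) : G.red c s :=
  Function.Iterate.rec (f := pruneStep) (fun H : RBGraph S C => ∀ c s, H.red c s → G.red c s)
    (fun _ _ => id)
    (fun _ hH c s hr => hH c s hr.1) n c s h

lemma not_adj_pruneStep_of_redUniversal {G : RBGraph S C} {c : C} (h : G.redUniversal c)
    (s : S) : ¬ (pruneStep G).adj c s := by
  rintro (hb | hr)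
  exacts [hb.2 h, hr.2 h]

/-- Invariant of all partial reductions; it guarantees that pruning never removes a black edge. -/
def Monochromatic (G : RBGraph S C) : Prop := ∀ c s s', G.red c s → ¬ G.black c s'

lemma monochromatic_ofMatrix (M : C → S → Prop) : (ofMatrix M).Monochromatic :=
  fun _ _ _ hr _ => hr

lemma Monochromatic.preRealize {G : RBGraph S C} (h : G.Monochromatic) (d : C) :
    (G.preRealize d).Monochromatic := by
  rintro c s s' (hr | ⟨rfl, -⟩) hb
  exacts [h c s s' hr hb.1, hb.2 rfl]

lemma Monochromatic.iterate_pruneStep {G : RBGraph S C} (h : G.Monochromatic) (n : ℕ) :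
    (pruneStep^[n] G).Monochromatic :=
  Function.Iterate.rec (f := pruneStep) Monochromatic h
    (fun _ hH c s s' hr hb => hH c s s' hr.1 hb.1) n

lemma Monochromatic.realize [Fintype C] {G : RBGraph S C} (h : G.Monochromatic) (d : C) :
    (G.realize d).Monochromatic :=
  (h.preRealize d).iterate_pruneStep _

lemma Monochromatic.realizeSeq [Fintype C] {G : RBGraph S C} (h : G.Monochromatic)
    (l : List C) : (G.realizeSeq l).Monochromatic := by
  induction l generalizing G with
  | nil => exact h
  | cons d l ih => exact ih (h.realize d)

lemma pruneStep_black_iff {G : RBGraph S C} (h : G.Monochromatic) {c : C} {s : S} :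
    (pruneStep G).black c s ↔ G.black c s :=
  ⟨And.left, fun hb => ⟨hb, fun hru => h c hru.1.choose s hru.1.choose_spec hb⟩⟩

structure Refines (G' G : RBGraph S C) : Prop where
  black_iff : ∀ c s, G'.black c s ↔ G.black c s
  red_iff : ∀ c s, G'.red c s ↔ G.red c s ∧ G'.sameComp c s

lemma refines_pruneStep {G : RBGraph S C} (hG : G.Monochromatic) : (pruneStep G).Refines G := by
  refine ⟨fun c s => pruneStep_black_iff hG, fun c s => ⟨fun hr => ⟨hr.1, sameComp_of_red hr⟩, ?_⟩⟩
  rintro ⟨hr, hsc⟩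
  exact ⟨hr, fun hru => not_sameComp_of_isolated (not_adj_pruneStep_of_redUniversal hru) s hsc⟩

namespace Refines

variable {G G' G'' : RBGraph S C}

lemma adj (h : G'.Refines G) {c : C} {s : S} (ha : G'.adj c s) : G.adj c s :=
  ha.imp (h.black_iff c s).1 fun hr => ((h.red_iff c s).1 hr).1

lemma reachable (h : G'.Refines G) {x y : S ⊕ C} (hr : G'.toSimple.Reachable x y) :
    G.toSimple.Reachable x y :=
  reachable_of_forall_adj (fun _ _ ha => sameComp_of_adj (h.adj ha)) hr

lemma refl (G : RBGraph S C) : G.Refines G :=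
  ⟨fun _ _ => Iff.rfl, fun _ _ => ⟨fun hr => ⟨hr, sameComp_of_red hr⟩, And.left⟩⟩

lemma trans (h₂ : G''.Refines G') (h₁ : G'.Refines G) : G''.Refines G := by
  refine ⟨fun c s => (h₂.black_iff c s).trans (h₁.black_iff c s), fun c s => ?_⟩
  rw [h₂.red_iff, h₁.red_iff]
  exact ⟨fun ⟨⟨hr, _⟩, hsc⟩ => ⟨hr, hsc⟩, fun ⟨hr, hsc⟩ => ⟨⟨hr, h₂.reachable hsc⟩, hsc⟩⟩

lemma edgeless (h : G'.Refines G) (hG : G.edgeless) : G'.edgeless :=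
  fun c s ha => hG c s (h.adj ha)

lemma redSigma (h : G'.Refines G) (hG' : G'.redSigma) : G.redSigma := by
  obtain ⟨c₁, c₂, s₁, s₂, s₃, hc, h₁₂, h₂₃, h₁₃, r₁₁, r₁₂, r₂₂, r₂₃, n₁₃, n₂₁⟩ := hG'
  have hred : ∀ {c s}, G'.red c s → G.red c s := fun hr => ((h.red_iff _ _).1 hr).1
  have hnadj : ∀ {c s}, G'.sameComp c s → ¬ G'.adj c s → ¬ G.adj c s :=
    fun hsc hn ha => hn (ha.imp (h.black_iff _ _).2 fun hr => (h.red_iff _ _).2 ⟨hr, hsc⟩)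
  exact ⟨c₁, c₂, s₁, s₂, s₃, hc, h₁₂, h₂₃, h₁₃, hred r₁₁, hred r₁₂, hred r₂₂, hred r₂₃,
    hnadj (sameComp_of_red_red_red r₁₂ r₂₂ r₂₃) n₁₃,
    hnadj (sameComp_of_red_red_red r₂₂ r₁₂ r₁₁) n₂₁⟩

lemma preRealize (h : G'.Refines G) (d : C) : (G'.preRealize d).Refines (G.preRealize d) := by
  refine ⟨fun c s => and_congr_left fun _ => h.black_iff c s, fun c s => ⟨fun hr => ?_, ?_⟩⟩
  · refine ⟨?_, sameComp_of_red hr⟩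
    rcases hr with hr | ⟨rfl, hnb, hsc⟩
    · exact Or.inl ((h.red_iff c s).1 hr).1
    · exact Or.inr ⟨rfl, fun hb => hnb ((h.black_iff c s).2 hb), h.reachable hsc⟩
  · rintro ⟨hr | ⟨rfl, hnb, -⟩, hsc⟩ <;> have hsc' := reachable_of_reachable_preRealize hsc
    · exact Or.inl ((h.red_iff c s).2 ⟨hr, hsc'⟩)
    · exact Or.inr ⟨rfl, fun hb => hnb ((h.black_iff c s).1 hb), hsc'⟩

lemma redUniversal (h : G'.Refines G) {c : C} (hru : G.redUniversal c) (hact : G'.active c) :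
    G'.redUniversal c :=
  ⟨hact, fun s hsc => (h.red_iff c s).2 ⟨hru.2 s (h.reachable hsc), hsc⟩⟩

lemma pruneStep (h : G'.Refines G) (hG : G.Monochromatic) (hG' : G'.Monochromatic) :
    (pruneStep G').Refines (pruneStep G) := by
  refine ⟨fun c s => by rw [pruneStep_black_iff hG, pruneStep_black_iff hG', h.black_iff],
    fun c s => ⟨fun hr => ?_, fun ⟨⟨hr, _⟩, hsc⟩ => ?_⟩⟩
  · obtain ⟨hr', hnru'⟩ := hr
    refine ⟨⟨((h.red_iff c s).1 hr').1, fun hru => hnru' (h.redUniversal hru ⟨s, hr'⟩)⟩,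
      sameComp_of_red ⟨hr', hnru'⟩⟩
  · have hnru' : ¬ G'.redUniversal c := fun hru =>
      not_sameComp_of_isolated (not_adj_pruneStep_of_redUniversal hru) s hsc
    exact ⟨(h.red_iff c s).2 ⟨hr, (refines_pruneStep hG').reachable hsc⟩, hnru'⟩

lemma iterate_pruneStep (h : G'.Refines G) (hG : G.Monochromatic) (hG' : G'.Monochromatic)
    (n : ℕ) : (RBGraph.pruneStep^[n] G').Refines (RBGraph.pruneStep^[n] G) := by
  induction n with
  | zero => exact h
  | succ n ih =>
    simp only [Function.iterate_succ_apply']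
    exact ih.pruneStep (hG.iterate_pruneStep n) (hG'.iterate_pruneStep n)

lemma realize [Fintype C] (h : G'.Refines G) (hG : G.Monochromatic) (hG' : G'.Monochromatic)
    (d : C) : (G'.realize d).Refines (G.realize d) :=
  (h.preRealize d).iterate_pruneStep (hG.preRealize d) (hG'.preRealize d) _

lemma realizeSeq [Fintype C] (h : G'.Refines G) (hG : G.Monochromatic)
    (hG' : G'.Monochromatic) (l : List C) : (G'.realizeSeq l).Refines (G.realizeSeq l) := by
  induction l generalizing G G' with
  | nil => exact h
  | cons d l ih => exact ih (h.realize hG hG' d) (hG.realize d) (hG'.realize d)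

end Refines

lemma refines_prune [Fintype C] {G : RBGraph S C} (hG : G.Monochromatic) :
    (prune G).Refines G := by
  suffices ∀ n, (pruneStep^[n] G).Refines G from this _
  intro n
  induction n with
  | zero => exact Refines.refl G
  | succ n ih =>
    rw [Function.iterate_succ_apply']
    exact (refines_pruneStep (hG.iterate_pruneStep n)).trans ih

lemma redSigma_pruneStep {G : RBGraph S C} (h : G.redSigma) : (pruneStep G).redSigma := by
  obtain ⟨c₁, c₂, s₁, s₂, s₃, hc, h₁₂, h₂₃, h₁₃, r₁₁, r₁₂, r₂₂, r₂₃, n₁₃, n₂₁⟩ := h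
  have hnru₁ : ¬ G.redUniversal c₁ := fun hru =>
    n₁₃ (Or.inr (hru.2 s₃ (sameComp_of_red_red_red r₁₂ r₂₂ r₂₃)))
  have hnru₂ : ¬ G.redUniversal c₂ := fun hru =>
    n₂₁ (Or.inr (hru.2 s₁ (sameComp_of_red_red_red r₂₂ r₁₂ r₁₁)))
  exact ⟨c₁, c₂, s₁, s₂, s₃, hc, h₁₂, h₂₃, h₁₃, ⟨r₁₁, hnru₁⟩, ⟨r₁₂, hnru₁⟩, ⟨r₂₂, hnru₂⟩,
    ⟨r₂₃, hnru₂⟩, fun ha => n₁₃ (adj_of_adj_iterate_pruneStep 1 ha),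
    fun ha => n₂₁ (adj_of_adj_iterate_pruneStep 1 ha)⟩

lemma redSigma_preRealize {G : RBGraph S C} {d : C} (hd : G.inactive d) (h : G.redSigma) :
    (G.preRealize d).redSigma := by
  obtain ⟨c₁, c₂, s₁, s₂, s₃, hc, h₁₂, h₂₃, h₁₃, r₁₁, r₁₂, r₂₂, r₂₃, n₁₃, n₂₁⟩ := h
  have hnadj : ∀ {c s s'}, G.red c s' → ¬ G.adj c s → ¬ (G.preRealize d).adj c s := by
    rintro c s s' hr hn (⟨hb, -⟩ | hr' | ⟨rfl, -⟩)
    exacts [hn (Or.inl hb), hn (Or.inr hr'), hd ⟨s', hr⟩]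
  exact ⟨c₁, c₂, s₁, s₂, s₃, hc, h₁₂, h₂₃, h₁₃, Or.inl r₁₁, Or.inl r₁₂, Or.inl r₂₂, Or.inl r₂₃,
    hnadj r₁₁ n₁₃, hnadj r₂₂ n₂₁⟩

lemma redSigma_realize [Fintype C] {G : RBGraph S C} {d : C} (hd : G.inactive d)
    (h : G.redSigma) : (G.realize d).redSigma :=
  Function.Iterate.rec (f := pruneStep) redSigma (redSigma_preRealize hd h)
    (fun _ => redSigma_pruneStep) _

lemma inactive_realize [Fintype C] {G : RBGraph S C} {c d : C} (hne : c ≠ d)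
    (hc : G.inactive c) : (G.realize d).inactive c := by
  rintro ⟨s, hr⟩
  rcases red_of_red_iterate_pruneStep _ hr with hr | ⟨rfl, -⟩
  exacts [hc ⟨s, hr⟩, hne rfl]

lemma inactive_realizeSeq [Fintype C] {G : RBGraph S C} {c : C} {l : List C} (hl : c ∉ l)
    (hc : G.inactive c) : (G.realizeSeq l).inactive c := by
  induction l generalizing G with
  | nil => exact hc
  | cons d l ih =>
    rw [List.mem_cons, not_or] at hl
    exact ih hl.2 (inactive_realize hl.1 hc)

lemma realize_eq_preRealize [Fintype C] {G : RBGraph S C} {c : C}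
    (hsame : ∀ x y, G.toSimple.Reachable x y ↔ (G.realize c).toSimple.Reachable x y) :
    G.realize c = G.preRealize c := by
  have hnru : ∀ d, ¬ (G.preRealize c).redUniversal d := by
    rintro d hru
    obtain ⟨s, hr⟩ := hru.1
    obtain ⟨n, hn⟩ := Nat.exists_eq_add_one.2 (Fintype.card_pos_iff.2 ⟨c⟩)
    have hiso : ∀ t, ¬ (G.realize c).adj d t := by
      intro t ha
      rw [realize_eq_prune_preRealize, prune, hn, Function.iterate_succ_apply] at ha
      exact not_adj_pruneStep_of_redUniversal hru t (adj_of_adj_iterate_pruneStep n ha)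
    exact not_sameComp_of_isolated hiso s ((hsame _ _).1 (sameComp_of_adj_preRealize (Or.inr hr)))
  have hfix : pruneStep (G.preRealize c) = G.preRealize c := by
    simp only [pruneStep, hnru, not_false_eq_true, and_true]
  rw [realize_eq_prune_preRealize, prune, Function.iterate_fixed hfix]

lemma refines_preRealize_swap {G : RBGraph S C} {c c' : C} (hne : c ≠ c')
    (hsame : ∀ x y, (G.preRealize c).toSimple.Reachable x y ↔ G.toSimple.Reachable x y) :
    ((G.preRealize c').preRealize c).Refines ((G.preRealize c).preRealize c') := by
  refine ⟨fun e s => by simp only [preRealize]; tauto,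
    fun e s => ⟨fun hr => ⟨?_, sameComp_of_red hr⟩, ?_⟩⟩
  · rcases hr with (hr | ⟨rfl, hnb, hsc⟩) | ⟨rfl, hnb, hsc⟩
    · exact Or.inl (Or.inl hr)
    · exact Or.inr ⟨rfl, fun hb => hnb hb.1, (hsame _ _).2 hsc⟩
    · exact Or.inl (Or.inr ⟨rfl, fun hb => hnb ⟨hb, hne⟩, reachable_of_reachable_preRealize hsc⟩)
  · rintro ⟨(hr | ⟨rfl, hnb, -⟩) | ⟨rfl, hnb, hsc⟩, hsc'⟩
    · exact Or.inl (Or.inl hr)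
    · exact Or.inr ⟨rfl, fun hb => hnb hb.1, reachable_of_reachable_preRealize hsc'⟩
    · exact Or.inl (Or.inr ⟨rfl, fun hb => hnb ⟨hb, hne.symm⟩, (hsame _ _).1 hsc⟩)

lemma refines_realize_swap [Fintype C] {G : RBGraph S C} (hG : G.Monochromatic) {c c' : C}
    (hne : c ≠ c')
    (hsame : ∀ x y, G.toSimple.Reachable x y ↔ (G.realize c).toSimple.Reachable x y) :
    ((G.realize c').realize c).Refines ((G.realize c).realize c') := by
  have hc : G.realize c = G.preRealize c := realize_eq_preRealize hsame
  rw [hc] at hsame ⊢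
  have hswap := refines_preRealize_swap hne fun x y => (hsame x y).symm
  exact ((refines_prune (hG.preRealize c')).realize (hG.preRealize c')
    (hG.realize c') c).trans
    (hswap.iterate_pruneStep ((hG.preRealize c).preRealize c') ((hG.preRealize c').preRealize c) _)

lemma realizeSeq_append [Fintype C] (G : RBGraph S C) (l₁ l₂ : List C) :
    G.realizeSeq (l₁ ++ l₂) = (G.realizeSeq l₁).realizeSeq l₂ :=
  List.foldl_append

lemma inactive_ofMatrix (M : C → S → Prop) (c : C) : (ofMatrix M).inactive c :=
  fun ⟨_, h⟩ => h

theorem isReduction_swap [Fintype C] {M : C → S → Prop} {p t : List C} {c c' : C}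
    (hl : isReduction M (p ++ c :: c' :: t))
    (hsame : ∀ x y, ((ofMatrix M).realizeSeq p).toSimple.Reachable x y ↔
      (((ofMatrix M).realizeSeq p).realize c).toSimple.Reachable x y) :
    isReduction M (p ++ c' :: c :: t) := by
  obtain ⟨hnd, hmem, hedge, hsigma⟩ := hl
  have hperm : (p ++ c' :: c :: t).Perm (p ++ c :: c' :: t) :=
    (List.Perm.swap c c' t).append_left p
  have hcc' : c ≠ c' :=
    fun h => (List.nodup_cons.1 (List.nodup_append.1 hnd).2.1).1 (h ▸ List.mem_cons_self)
  have hcp : c ∉ p := fun h => (List.nodup_append.1 hnd).2.2 c h c (by simp) rfl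
  set G := (ofMatrix M).realizeSeq p
  have hG : G.Monochromatic := (monochromatic_ofMatrix M).realizeSeq p
  have hswap := refines_realize_swap hG hcc' hsame
  have hswap_seq (u : List C) :
      ((G.realizeSeq [c', c]).realizeSeq u).Refines ((G.realizeSeq [c, c']).realizeSeq u) :=
    hswap.realizeSeq ((hG.realize c).realize c') ((hG.realize c').realize c) u
  refine ⟨hperm.nodup_iff.2 hnd, fun x => hperm.mem_iff.2 (hmem x), ?_, fun k hk => ?_⟩
  · rw [realizeSeq_append] at hedge ⊢
    exact (hswap_seq t).edgeless hedge
  have hk' := hsigma k (hperm.length_eq ▸ hk)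
  rw [List.take_append] at hk' ⊢
  rcases hj : k - p.length with _ | _ | j
  · simpa [hj] using hk'
  · -- `c` is still inactive after `p ++ [c']`, so realizing it would keep a red Σ-graph,
    -- which then also appears after `p ++ [c, c']`.
    rw [List.take_of_length_le (by omega)]
    intro hs
    rw [realizeSeq_append] at hs
    have hc : (G.realize c').inactive c :=
      inactive_realize hcc' (inactive_realizeSeq hcp (inactive_ofMatrix M c))
    apply hsigma (p.length + 2) (by simp)
    rw [List.take_append, List.take_of_length_le (by omega), Nat.add_sub_cancel_left,
      realizeSeq_append]
    exact hswap.redSigma (redSigma_realize hc hs)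
  · rw [List.take_of_length_le (by omega)] at hk' ⊢
    rw [hj] at hk'
    simp only [List.take_succ_cons, realizeSeq_append] at hk' ⊢
    exact fun hs => hk' ((hswap_seq (t.take j)).redSigma hs)

end RBGraph

/-- Swapping lemma. -/
theorem swap_lemma {S C : Type} [Fintype C] (M : C → S → Prop)
    (l : List C) (hl : RBGraph.isReduction M l) (i : ℕ) (hi : i + 1 < l.length)
    (hsame : ∀ x y : S ⊕ C,
      (RBGraph.partialRed M l i).toSimple.Reachable x y ↔
      (RBGraph.partialRed M l (i + 1)).toSimple.Reachable x y) :
    RBGraph.isReduction M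
      (l.take i ++ [l.get ⟨i + 1, hi⟩, l.get ⟨i, Nat.lt_of_succ_lt hi⟩] ++ l.drop (i + 2)) := by
  have hil : i < l.length := Nat.lt_of_succ_lt hi
  have hsplit : l = l.take i ++ l[i] :: l[i + 1] :: l.drop (i + 2) := by
    rw [← List.drop_eq_getElem_cons, ← List.drop_eq_getElem_cons, List.take_append_drop]
  have hprefix : l.take (i + 1) = l.take i ++ [l[i]] := by
    rw [List.take_add_one, List.getElem?_eq_getElem hil]
    rfl
  have hl' : RBGraph.isReduction M (l.take i ++ l[i] :: l[i + 1] :: l.drop (i + 2)) := by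
    rwa [← hsplit]
  simp only [RBGraph.partialRed, hprefix, RBGraph.realizeSeq_append] at hsame
  simpa using RBGraph.isReduction_swap hl' hsame
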